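/- arXiv:2007.10195 — 9 statements merged into one kernel-verified Lean document; each statement's English description precedes it below -/
import Mathlib

section
/- A connected topological space with at least three points has at most one dispersion point (a point whose removal leaves a totally disconnected subspace). -/
open Set

/-- Auxiliary: in a connected space, if `A ∪ B = {x}ᶜ` with `A`, `B` separated, and
`P, Q` is a putative separation of `insert x A` with `x ∈ P` and the `Q`-part nonempty,
then we get a contradiction: the `Q`-part is a proper nonempty clopen subset. -/
private lemma dispersion_key {X : Type*} [TopologicalSpace X] [ConnectedSpace X]
    {x : X} {A B : Set X}
    (hcov : A ∪ B = ({x}ᶜ : Set X))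
    (hs1 : closure A ∩ B = ∅) (hs2 : A ∩ closure B = ∅)
    {P Q : Set X} (hP : IsOpen P) (hQ : IsOpen Q)
    (hsub : insert x A ⊆ P ∪ Q) (hxP : x ∈ P)
    (hQne : (insert x A ∩ Q).Nonempty)
    (hdisj : insert x A ∩ (P ∩ Q) = ∅) : False := by
  set C : Set X := insert x A with hC
  set Q' : Set X := C ∩ Q with hQ'
  set R : Set X := (C ∩ P) ∪ B with hR
  have hxQ : x ∉ Q := by
    intro hxQ
    have : x ∈ C ∩ (P ∩ Q) := ⟨mem_insert _ _, hxP, hxQ⟩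
    rw [hdisj] at this; exact this
  have hQ'A : Q' ⊆ A := by
    rintro t ⟨htC, htQ⟩
    rcases htC with rfl | htA
    · exact absurd htQ hxQ
    · exact htA
  -- Q' and C ∩ P are disjoint
  have hdisj' : (C ∩ P) ∩ Q' = ∅ := by
    apply eq_empty_iff_forall_notMem.2
    rintro t ⟨⟨htC, htP⟩, _, htQ⟩
    have : t ∈ C ∩ (P ∩ Q) := ⟨htC, htP, htQ⟩
    rw [hdisj] at this; exact this
  have hAB : A ∩ B = ∅ := by
    apply eq_empty_iff_forall_notMem.2
    rintro t ⟨htA, htB⟩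
    have : t ∈ A ∩ closure B := ⟨htA, subset_closure htB⟩
    rw [hs2] at this; exact this
  -- the cover
  have hcover : Q' ∪ R = univ := by
    apply eq_univ_of_forall
    intro t
    by_cases ht : t = x
    · subst ht; exact Or.inr (Or.inl ⟨mem_insert _ _, hxP⟩)
    · have : t ∈ A ∪ B := by rw [hcov]; exact ht
      rcases this with htA | htB
      · have : t ∈ P ∪ Q := hsub (mem_insert_of_mem _ htA)
        rcases this with htP | htQ
        · exact Or.inr (Or.inl ⟨mem_insert_of_mem _ htA, htP⟩)
        · exact Or.inl ⟨mem_insert_of_mem _ htA, htQ⟩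
      · exact Or.inr (Or.inr htB)
  -- disjointness of Q' and R
  have hQR : Q' ∩ R = ∅ := by
    apply eq_empty_iff_forall_notMem.2
    rintro t ⟨htQ', htCP | htB⟩
    · exact eq_empty_iff_forall_notMem.1 hdisj' t ⟨htCP, htQ'⟩
    · exact eq_empty_iff_forall_notMem.1 hAB t ⟨hQ'A htQ', htB⟩
  -- closure Q' misses R
  have hclQ'R : closure Q' ∩ R = ∅ := by
    apply eq_empty_iff_forall_notMem.2
    rintro t ⟨htcl, htCP | htB⟩
    · -- t ∈ C ∩ P, P open, P ∩ Q' = ∅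
      have hPQ' : P ∩ Q' = ∅ := by
        rw [← hdisj']; ext s; constructor
        · rintro ⟨hsP, hsQ'⟩; exact ⟨⟨hsQ'.1, hsP⟩, hsQ'⟩
        · rintro ⟨⟨_, hsP⟩, hsQ'⟩; exact ⟨hsP, hsQ'⟩
      have : t ∈ P ∩ closure Q' := ⟨htCP.2, htcl⟩
      have h2 := hP.inter_closure this
      rw [hPQ', closure_empty] at h2; exact h2
    · have : t ∈ closure A ∩ B := ⟨closure_mono hQ'A htcl, htB⟩
      rw [hs1] at this; exact this
  -- Q' misses closure R
  have hQ'clR : Q' ∩ closure R = ∅ := by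
    apply eq_empty_iff_forall_notMem.2
    rintro t ⟨htQ', htcl⟩
    rw [hR, closure_union] at htcl
    rcases htcl with htcl | htcl
    · have hQCP : Q ∩ (C ∩ P) = ∅ := by
        apply eq_empty_iff_forall_notMem.2
        rintro s ⟨hsQ, hsC, hsP⟩
        have : s ∈ C ∩ (P ∩ Q) := ⟨hsC, hsP, hsQ⟩
        rw [hdisj] at this; exact this
      have : t ∈ Q ∩ closure (C ∩ P) := ⟨htQ'.2, htcl⟩
      have h2 := hQ.inter_closure this
      rw [hQCP, closure_empty] at h2; exact h2
    · have : t ∈ A ∩ closure B := ⟨hQ'A htQ', htcl⟩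
      rw [hs2] at this; exact this
  -- Q' is clopen
  have hclosed : IsClosed Q' := by
    rw [← closure_subset_iff_isClosed]
    intro t ht
    have : t ∈ Q' ∪ R := hcover ▸ mem_univ t
    rcases this with h | h
    · exact h
    · exact (eq_empty_iff_forall_notMem.1 hclQ'R t ⟨ht, h⟩).elim
  have hopen : IsOpen Q' := by
    have hcompl : Q'ᶜ = R := by
      ext t; constructor
      · intro ht
        have : t ∈ Q' ∪ R := hcover ▸ mem_univ t
        rcases this with h | h
        · exact absurd h ht
        · exact h
      · intro ht htQ'
        exact (eq_empty_iff_forall_notMem.1 hQR t) ⟨htQ', ht⟩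
    rw [← isClosed_compl_iff, hcompl, ← closure_subset_iff_isClosed]
    intro t ht
    have : t ∈ Q' ∪ R := hcover ▸ mem_univ t
    rcases this with h | h
    · exact (eq_empty_iff_forall_notMem.1 hQ'clR t ⟨h, ht⟩).elim
    · exact h
  have hclopen : IsClopen Q' := ⟨hclosed, hopen⟩
  rcases isClopen_iff.1 hclopen with h | h
  · rw [h] at hQne; exact Set.not_nonempty_empty hQne
  · have : x ∈ Q' := h ▸ mem_univ x
    exact hxQ this.2

/-- Cut-point lemma: in a connected space, if `A ∪ B = {x}ᶜ` with `A, B` separated,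
then `insert x A` is preconnected. -/
private lemma dispersion_cut {X : Type*} [TopologicalSpace X] [ConnectedSpace X]
    {x : X} {A B : Set X}
    (hcov : A ∪ B = ({x}ᶜ : Set X))
    (hs1 : closure A ∩ B = ∅) (hs2 : A ∩ closure B = ∅) :
    IsPreconnected (insert x A) := by
  intro P Q hP hQ hsub hPne hQne
  by_contra h
  rw [Set.not_nonempty_iff_eq_empty] at h
  have hx : x ∈ P ∪ Q := hsub (mem_insert _ _)
  rcases hx with hxP | hxQ
  · exact (dispersion_key hcov hs1 hs2 hP hQ hsub hxP hQne h).elim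
  · have hsub' : insert x A ⊆ Q ∪ P := by rwa [union_comm]
    have h' : insert x A ∩ (Q ∩ P) = ∅ := by rwa [inter_comm Q P]
    exact (dispersion_key hcov hs1 hs2 hQ hP hsub' hxQ hPne h').elim

private lemma dispersion_aux {X : Type*} [TopologicalSpace X] [ConnectedSpace X]
    {x y : X} (hxy : x ≠ y) {A B : Set X}
    (hcov : A ∪ B = ({x}ᶜ : Set X))
    (hs1 : closure A ∩ B = ∅) (hs2 : A ∩ closure B = ∅)
    (hA : A.Nonempty) (hyB : y ∈ B)
    (hy : IsTotallyDisconnected ({y}ᶜ : Set X)) : False := by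
  have hpre := dispersion_cut hcov hs1 hs2
  have hAB : A ∩ B = ∅ := by
    apply eq_empty_iff_forall_notMem.2
    rintro t ⟨htA, htB⟩
    have : t ∈ A ∩ closure B := ⟨htA, subset_closure htB⟩
    rw [hs2] at this; exact this
  have hsub : insert x A ⊆ ({y}ᶜ : Set X) := by
    rintro t (rfl | htA)
    · exact hxy
    · intro hty
      rw [mem_singleton_iff] at hty
      subst hty
      exact eq_empty_iff_forall_notMem.1 hAB t ⟨htA, hyB⟩
  have hss := hy _ hsub hpre
  obtain ⟨a, ha⟩ := hA
  have hax : a = x := hss (mem_insert_of_mem _ ha) (mem_insert _ _)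
  have : a ∈ ({x}ᶜ : Set X) := hcov ▸ Or.inl ha
  exact this (by rw [hax]; rfl)

/-- A connected topological space with at least three points has at most one dispersion
point, i.e. a point whose removal leaves a totally disconnected subspace. -/
theorem dispersion_point_unique {X : Type*} [TopologicalSpace X] [ConnectedSpace X]
    (hcard : 3 ≤ Cardinal.mk X) (x y : X)
    (hx : IsTotallyDisconnected ({x}ᶜ : Set X))
    (hy : IsTotallyDisconnected ({y}ᶜ : Set X)) :
    x = y := by
  by_contra hxy
  obtain ⟨z, hzx, hzy⟩ := Cardinal.three_le hcard x y
  have hyx : y ∈ ({x}ᶜ : Set X) := fun h => hxy (mem_singleton_iff.1 h).symm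
  have hzx' : z ∈ ({x}ᶜ : Set X) := fun h => hzx (mem_singleton_iff.1 h)
  -- {x}ᶜ is not preconnected
  have hnp : ¬ IsPreconnected ({x}ᶜ : Set X) := by
    intro h
    exact hzy (hx _ subset_rfl h hzx' hyx)
  rw [IsPreconnected] at hnp
  push_neg at hnp
  obtain ⟨U, V, hU, hV, hcovUV, hUne, hVne, hfin⟩ := hnp
  set A : Set X := {x}ᶜ ∩ U with hA
  set B : Set X := {x}ᶜ ∩ V with hB
  have hcov : A ∪ B = ({x}ᶜ : Set X) := by
    ext t; constructor
    · rintro (⟨h1, _⟩ | ⟨h1, _⟩) <;> exact h1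
    · intro ht
      rcases hcovUV ht with h | h
      · exact Or.inl ⟨ht, h⟩
      · exact Or.inr ⟨ht, h⟩
  have hAV : V ∩ A = ∅ := by
    apply eq_empty_iff_forall_notMem.2
    rintro t ⟨htV, htc, htU⟩
    exact eq_empty_iff_forall_notMem.1 hfin t ⟨htc, htU, htV⟩
  have hBU : U ∩ B = ∅ := by
    apply eq_empty_iff_forall_notMem.2
    rintro t ⟨htU, htc, htV⟩
    exact eq_empty_iff_forall_notMem.1 hfin t ⟨htc, htU, htV⟩
  have hs1 : closure A ∩ B = ∅ := by
    apply eq_empty_iff_forall_notMem.2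
    rintro t ⟨htcl, htB⟩
    have : t ∈ V ∩ closure A := ⟨htB.2, htcl⟩
    have h2 := hV.inter_closure this
    rw [hAV, closure_empty] at h2; exact h2
  have hs2 : A ∩ closure B = ∅ := by
    apply eq_empty_iff_forall_notMem.2
    rintro t ⟨htA, htcl⟩
    have : t ∈ U ∩ closure B := ⟨htA.2, htcl⟩
    have h2 := hU.inter_closure this
    rw [hBU, closure_empty] at h2; exact h2
  rcases (hcov ▸ hyx : y ∈ A ∪ B) with hyA | hyB
  · -- swap roles of A and B
    have hcov' : B ∪ A = ({x}ᶜ : Set X) := by rwa [union_comm]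
    have hs1' : closure B ∩ A = ∅ := by rwa [inter_comm] at hs2
    have hs2' : B ∩ closure A = ∅ := by rwa [inter_comm] at hs1
    exact dispersion_aux hxy hcov' hs1' hs2' hVne hyA hy
  · exact dispersion_aux hxy hcov hs1 hs2 hUne hyB hy
end

section
/- If X is a connected topological space and U₀, U₁ are nonempty disjoint open subsets of X, then the subspace X \ U₀ is not zero-dimensional, i.e., the subspace X \ U₀ does not have a basis of sets that are clopen in X \ U₀. -/
/-- If `X` is connected and `U₀, U₁` are nonempty disjoint open subsets, then the
subspace `X \ U₀` is not zero-dimensional: it has no basis of clopen sets. -/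
theorem not_zero_dimensional {X : Type*} [TopologicalSpace X] [ConnectedSpace X]
    (U₀ U₁ : Set X) (h₀ : IsOpen U₀) (h₁ : IsOpen U₁)
    (hne₀ : U₀.Nonempty) (hne₁ : U₁.Nonempty) (hd : Disjoint U₀ U₁) :
    ¬ ∃ B : Set (Set ↥(U₀ᶜ)), TopologicalSpace.IsTopologicalBasis B ∧
        ∀ s ∈ B, IsClopen s := by
  rintro ⟨B, hB, hclopen⟩
  obtain ⟨x, hx1⟩ := hne₁
  have hx0 : x ∈ U₀ᶜ := fun h => hd.ne_of_mem h hx1 rfl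
  set x' : ↥(U₀ᶜ) := ⟨x, hx0⟩
  have hV : IsOpen (Subtype.val ⁻¹' U₁ : Set ↥(U₀ᶜ)) := h₁.preimage continuous_subtype_val
  obtain ⟨s, hsB, hxs, hsV⟩ := hB.exists_subset_of_mem_open (show x' ∈ _ from hx1) hV
  have hs := hclopen s hsB
  have hsub1 : Subtype.val '' s ⊆ U₁ := by
    rintro _ ⟨y, hy, rfl⟩; exact hsV hy
  have hU1sub : U₁ ⊆ U₀ᶜ := fun y hy h => hd.ne_of_mem h hy rfl
  -- image is closed
  have hclosed : IsClosed (Subtype.val '' s) :=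
    h₀.isClosed_compl.isClosedEmbedding_subtypeVal.isClosedMap _ hs.isClosed
  -- image is open
  have hopen : IsOpen (Subtype.val '' s) := by
    obtain ⟨t, ht, hts⟩ := isOpen_induced_iff.mp hs.isOpen
    have himg : Subtype.val '' s = t ∩ U₀ᶜ := by
      rw [← hts, Subtype.image_preimage_coe, Set.inter_comm]
    have : Subtype.val '' s = t ∩ U₁ := by
      rw [himg]
      apply Set.Subset.antisymm
      · intro y hy
        exact ⟨hy.1, hsub1 (himg ▸ hy)⟩
      · intro y hy
        exact ⟨hy.1, hU1sub hy.2⟩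
    rw [this]; exact ht.inter h₁
  have := (isClopen_iff.mp ⟨hclosed, hopen⟩)
  rcases this with h | h
  · have : x ∈ Subtype.val '' s := ⟨x', hxs, rfl⟩
    rw [h] at this
    exact this
  · obtain ⟨z, hz⟩ := hne₀
    have : z ∈ U₁ := hsub1 (h ▸ Set.mem_univ z)
    exact hd.ne_of_mem hz this rfl
end

section
/- Let X be a Hausdorff connected topological space with at least two points such that for every nonempty open O ⊆ X the subspace X \ O is totally separated. Then no nonempty open subset O of X has compact closure. -/
open Set

/-- Core lemma: if `O` is nonempty open with compact closure, `Oᶜ` is totally separated,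
and there is a point outside `closure O`, then the space is disconnected. -/
lemma core_no_compact_closure {X : Type*} [TopologicalSpace X] [T2Space X] [ConnectedSpace X]
    (O : Set X) (hO : IsOpen O) (hne : O.Nonempty)
    (hts : TotallySeparatedSpace ↥(Oᶜ)) (hK : IsCompact (closure O))
    (q : X) (hq : q ∉ closure O) : False := by
  set Z := ↥(Oᶜ)
  have hqO : q ∈ Oᶜ := fun h => hq (subset_closure h)
  let q' : Z := ⟨q, hqO⟩
  -- the "frontier" inside the subtype
  set F : Set Z := Subtype.val ⁻¹' closure O with hF
  have hFc : IsCompact F := by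
    rw [Subtype.isCompact_iff, Subtype.image_preimage_coe]
    exact hK.inter_left (hO.isClosed_compl)
  have key : ∀ x : Z, (x : X) ∈ closure O → ∃ U : Set Z, IsClopen U ∧ x ∈ U ∧ q' ∉ U := by
    intro x hx
    have hxq : x ≠ q' := by intro h; subst h; exact hq hx
    obtain ⟨U, hUc, hxU, hqU⟩ := exists_isClopen_of_totally_separated hxq
    exact ⟨U, hUc, hxU, hqU⟩
  choose! U hUc hUx hUq using key
  obtain ⟨t, ht, hcov⟩ := hFc.elim_nhds_subcover U
    (fun x hx => ((hUc x hx).2).mem_nhds (hUx x hx))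
  set V : Set Z := ⋃ x ∈ t, U x with hV
  have hVc : IsClopen V := isClopen_biUnion_finset (fun x hx => hUc x (ht x hx))
  have hqV : q' ∉ V := by
    intro hmem
    rcases Set.mem_iUnion₂.mp hmem with ⟨x, hx, hmemU⟩
    exact hUq x (ht x hx) hmemU
  -- the candidate clopen set in `X`
  set S : Set X := Subtype.val '' Vᶜ with hS
  have hSq : q ∈ S := ⟨q', hqV, rfl⟩
  have hS_sub : S ⊆ (closure O)ᶜ := by
    rintro _ ⟨x, hxV, rfl⟩
    intro hx
    exact hxV (hcov hx)
  have hS_closed : IsClosed S :=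
    (hO.isClosed_compl).isClosedEmbedding_subtypeVal.isClosed_iff_image_isClosed.1 hVc.compl.1
  have hS_open : IsOpen S := by
    obtain ⟨T, hT, hTV⟩ := isOpen_induced_iff.mp hVc.compl.2
    have hST : S = T ∩ (closure O)ᶜ := by
      have h1 : S = T ∩ Oᶜ := by
        rw [hS, ← hTV, Subtype.image_preimage_coe, Set.inter_comm]
      apply Set.Subset.antisymm
      · exact Set.subset_inter (h1 ▸ Set.inter_subset_left) hS_sub
      · rw [h1]
        exact Set.inter_subset_inter_right _ (compl_subset_compl.mpr subset_closure)
    rw [hST]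
    exact hT.inter (isClosed_closure.isOpen_compl)
  rcases isClopen_iff.mp ⟨hS_closed, hS_open⟩ with h | h
  · rw [h] at hSq; exact hSq
  · obtain ⟨o, ho⟩ := hne
    have : o ∈ S := by rw [h]; trivial
    exact hS_sub this (subset_closure ho)

/-- A Hausdorff connected space with at least two points in which the complement of every
nonempty open set is totally separated has no nonempty open set with compact closure. -/
theorem no_compact_closure {X : Type*} [TopologicalSpace X] [T2Space X] [ConnectedSpace X]
    [Nontrivial X]
    (hts : ∀ O : Set X, IsOpen O → O.Nonempty → TotallySeparatedSpace ↥(Oᶜ)) :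
    ∀ O : Set X, IsOpen O → O.Nonempty → ¬ IsCompact (closure O) := by
  intro O hO hne hK
  by_cases h : closure O = Set.univ
  · -- then X is compact, hence regular; build a smaller open set with a point outside its closure
    have : CompactSpace X := isCompact_univ_iff.mp (h ▸ hK)
    obtain ⟨a, b, hab⟩ := exists_pair_ne X
    have hnb : ({b}ᶜ : Set X) ∈ nhds a :=
      (isOpen_compl_singleton).mem_nhds (by simpa using hab)
    obtain ⟨C, hCmem, hCclosed, hCsub⟩ := exists_mem_nhds_isClosed_subset hnb
    set U := interior C with hU
    have haU : a ∈ U := mem_interior_iff_mem_nhds.mpr hCmem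
    have hclU : closure U ⊆ C := closure_minimal interior_subset hCclosed
    have hbU : b ∉ closure U := fun hb => (hCsub (hclU hb)) rfl
    exact core_no_compact_closure U isOpen_interior ⟨a, haU⟩
      (hts U isOpen_interior ⟨a, haU⟩) (isClosed_closure.isCompact) b hbU
  · obtain ⟨q, hq⟩ : ∃ q, q ∉ closure O := by
      by_contra hcon
      push_neg at hcon
      exact h (Set.eq_univ_of_forall hcon)
    exact core_no_compact_closure O hO hne (hts O hO hne) hK q hq
end

section
/- If a topological space X has a basis B such that every decreasing (nesting) countable sequence B₀ ⊇ B₁ ⊇ B₂ ⊇ ⋯ of elements of B has nonempty intersection, then Player II (the nonempty player) has a winning strategy in the strong Choquet game on X. -/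
open TopologicalSpace

/-- A strategy for Player II in the strong Choquet game: given the history of
Player I's moves `(x₀,U₀),…,(xₙ,Uₙ)` so far, produce an open set `Vₙ`. -/
def StrongChoquetStrategy (X : Type*) := List (X × Set X) → Set X

/-- The history of Player I's first `n+1` moves of a run `p`. -/
def choquetHist {X : Type*} (p : ℕ → X × Set X) (n : ℕ) : List (X × Set X) :=
  (List.range (n + 1)).map p

/-- `p` is a legal run of Player I's moves in the strong Choquet game against the
strategy `σ` of Player II: each move `(xₙ, Uₙ)` has `Uₙ` open containing `xₙ`, and
each `Uₙ₊₁` is contained in Player II's previous response. -/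
def IsStrongChoquetRun {X : Type*} [TopologicalSpace X] (σ : StrongChoquetStrategy X)
    (p : ℕ → X × Set X) : Prop :=
  (∀ n, IsOpen (p n).2 ∧ (p n).1 ∈ (p n).2) ∧
  (∀ n, (p (n + 1)).2 ⊆ σ (choquetHist p n))

/-- `σ` is a winning strategy for Player II in the strong Choquet game: it always
responds to a legal partial history `(x₀,U₀),…,(xₙ,Uₙ)` with an open set `Vₙ` with
`xₙ ∈ Vₙ ⊆ Uₙ`, and in every legal run the intersection `⋂ₙ Uₙ` is nonempty. -/
def IsStrongChoquetWinning {X : Type*} [TopologicalSpace X]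
    (σ : StrongChoquetStrategy X) : Prop :=
  (∀ p : ℕ → X × Set X, ∀ n : ℕ,
      ((∀ m, m ≤ n → IsOpen (p m).2 ∧ (p m).1 ∈ (p m).2) ∧
       (∀ m, m < n → (p (m + 1)).2 ⊆ σ (choquetHist p m))) →
      IsOpen (σ (choquetHist p n)) ∧ (p n).1 ∈ σ (choquetHist p n) ∧
        σ (choquetHist p n) ⊆ (p n).2) ∧
  (∀ p : ℕ → X × Set X, IsStrongChoquetRun σ p → (⋂ n, (p n).2).Nonempty)

lemma choquetHist_getLast? {X : Type*} (p : ℕ → X × Set X) (n : ℕ) :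
    (choquetHist p n).getLast? = some (p n) := by
  unfold choquetHist
  rw [List.range_succ, List.map_append, List.map_singleton, List.getLast?_concat]

/-- If a space has a basis such that every nesting decreasing countable sequence of basis
elements has nonempty intersection, then Player II has a winning strategy in the strong
Choquet game. -/
theorem stronglyChoquet_of_basis {X : Type*} [TopologicalSpace X]
    (B : Set (Set X)) (hB : IsTopologicalBasis B)
    (h : ∀ f : ℕ → Set X, (∀ n, f n ∈ B) → (∀ n, f (n + 1) ⊆ f n) →
      (⋂ n, f n).Nonempty) :
    ∃ σ : StrongChoquetStrategy X, IsStrongChoquetWinning σ := by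
  classical
  set σ : StrongChoquetStrategy X := fun l =>
    match l.getLast? with
    | none => Set.univ
    | some (x, U) =>
      if hx : x ∈ U ∧ IsOpen U then
        (hB.exists_subset_of_mem_open hx.1 hx.2).choose
      else Set.univ
  have key : ∀ p : ℕ → X × Set X, ∀ n, IsOpen (p n).2 → (p n).1 ∈ (p n).2 →
      σ (choquetHist p n) ∈ B ∧ (p n).1 ∈ σ (choquetHist p n) ∧
        σ (choquetHist p n) ⊆ (p n).2 := by
    intro p n ho hm
    have : σ (choquetHist p n) =
        (hB.exists_subset_of_mem_open hm ho).choose := by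
      simp only [σ, choquetHist_getLast?]
      rw [dif_pos ⟨hm, ho⟩]
    rw [this]
    have hs := (hB.exists_subset_of_mem_open hm ho).choose_spec
    exact ⟨hs.1, hs.2.1, hs.2.2⟩
  refine ⟨σ, ?_, ?_⟩
  · intro p n hp
    obtain ⟨ho, hm⟩ := hp.1 n le_rfl
    obtain ⟨h1, h2, h3⟩ := key p n ho hm
    exact ⟨hB.isOpen h1, h2, h3⟩
  · intro p hp
    set f : ℕ → Set X := fun n => σ (choquetHist p n) with hf
    have hmem : ∀ n, f n ∈ B ∧ (p n).1 ∈ f n ∧ f n ⊆ (p n).2 := fun n =>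
      key p n (hp.1 n).1 (hp.1 n).2
    have hne := h f (fun n => (hmem n).1)
      (fun n => ((hmem (n + 1)).2.2).trans (hp.2 n))
    exact hne.mono (Set.iInter_mono fun n => (hmem n).2.2)
end

section
/- A nonempty regular connected space with at least two points in which Player II has a winning strategy in the strong Choquet game has cardinality at least 2^ℵ₀. -/
open TopologicalSpace

namespace ChoquetAux

variable {X : Type*} [TopologicalSpace X]

lemma exists_two_disjoint [T2Space X] [ConnectedSpace X] [Nontrivial X]
    {U : Set X} (hU : IsOpen U) (hne : U.Nonempty) :
    ∃ q : (X × Set X) × (X × Set X),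
      q.1.1 ∈ q.1.2 ∧ q.2.1 ∈ q.2.2 ∧ IsOpen q.1.2 ∧ IsOpen q.2.2 ∧
      q.1.2 ⊆ U ∧ q.2.2 ⊆ U ∧ Disjoint q.1.2 q.2.2 := by
  obtain ⟨x, hx⟩ := hne
  have hy : ∃ y ∈ U, y ≠ x := by
    by_contra hcon
    push_neg at hcon
    have hUx : U = {x} := Set.eq_singleton_iff_unique_mem.mpr ⟨hx, hcon⟩
    have hcl : IsClopen U := ⟨hUx ▸ isClosed_singleton, hU⟩
    rcases isClopen_iff.mp hcl with h | h
    · exact (Set.notMem_empty x (h ▸ hx))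
    · obtain ⟨y, z, hyz⟩ := exists_pair_ne X
      apply hyz
      have hy : y = x := hcon y (h ▸ Set.mem_univ y)
      have hz : z = x := hcon z (h ▸ Set.mem_univ z)
      rw [hy, hz]
  obtain ⟨y, hyU, hyx⟩ := hy
  obtain ⟨u, v, hu, hv, hyu, hxv, huv⟩ := t2_separation hyx
  exact ⟨((x, U ∩ v), (y, U ∩ u)), ⟨hx, hxv⟩, ⟨hyU, hyu⟩, hU.inter hv, hU.inter hu,
    Set.inter_subset_left, Set.inter_subset_left,
    (huv.symm.mono Set.inter_subset_right Set.inter_subset_right)⟩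

def tgt (σ : StrongChoquetStrategy X) (h : List (X × Set X)) : Set X :=
  match h with
  | [] => Set.univ
  | _ => σ h

lemma tgt_ne_nil (σ : StrongChoquetStrategy X) {h : List (X × Set X)} (hh : h ≠ []) :
    tgt σ h = σ h := by
  cases h with
  | nil => exact absurd rfl hh
  | cons a t => rfl

def Pgood (σ : StrongChoquetStrategy X) (h : List (X × Set X)) (q : (X × Set X) × (X × Set X)) : Prop :=
  q.1.1 ∈ q.1.2 ∧ q.2.1 ∈ q.2.2 ∧ IsOpen q.1.2 ∧ IsOpen q.2.2 ∧
  q.1.2 ⊆ tgt σ h ∧ q.2.2 ⊆ tgt σ h ∧ Disjoint q.1.2 q.2.2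

open Classical in
noncomputable def pairC [Nonempty X] (σ : StrongChoquetStrategy X) (h : List (X × Set X)) : (X × Set X) × (X × Set X) :=
  if hh : ∃ q, Pgood σ h q then hh.choose else Classical.arbitrary _

lemma pairC_spec [Nonempty X] (σ : StrongChoquetStrategy X) {h : List (X × Set X)} (hh : ∃ q, Pgood σ h q) :
    Pgood σ h (pairC σ h) := by
  classical
  unfold pairC
  rw [dif_pos hh]
  exact hh.choose_spec

noncomputable def G [Nonempty X] (σ : StrongChoquetStrategy X) : List Bool → (X × Set X) × List (X × Set X)
  | [] => (Classical.arbitrary _, [])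
  | b :: s =>
      ((if b then (pairC σ (G σ s).2).1 else (pairC σ (G σ s).2).2),
       (G σ s).2 ++ [if b then (pairC σ (G σ s).2).1 else (pairC σ (G σ s).2).2])

lemma G_cons_snd [Nonempty X] (σ : StrongChoquetStrategy X) (b : Bool) (s : List Bool) :
    (G σ (b :: s)).2 = (G σ s).2 ++ [(G σ (b :: s)).1] := rfl

lemma G_cons_fst [Nonempty X] (σ : StrongChoquetStrategy X) (b : Bool) (s : List Bool) :
    (G σ (b :: s)).1 = if b then (pairC σ (G σ s).2).1 else (pairC σ (G σ s).2).2 := rfl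

def pref (a : ℕ → Bool) (n : ℕ) : List Bool := ((List.range n).map a).reverse

lemma pref_zero (a : ℕ → Bool) : pref a 0 = [] := by simp [pref]

lemma pref_succ (a : ℕ → Bool) (n : ℕ) : pref a (n + 1) = a n :: pref a n := by
  simp [pref, List.range_succ]

noncomputable def runP [Nonempty X] (σ : StrongChoquetStrategy X) (a : ℕ → Bool) (n : ℕ) : X × Set X :=
  (G σ (pref a (n + 1))).1

lemma choquetHist_succ {p : ℕ → X × Set X} (n : ℕ) :
    choquetHist p (n + 1) = choquetHist p n ++ [p (n + 1)] := by
  simp [choquetHist, List.range_succ]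

lemma hist_eq [Nonempty X] (σ : StrongChoquetStrategy X) (a : ℕ → Bool) :
    ∀ n, (G σ (pref a (n + 1))).2 = choquetHist (runP σ a) n
  | 0 => by
      rw [pref_succ, pref_zero, G_cons_snd]
      have h0 : runP σ a 0 = (G σ [a 0]).1 := by
        simp [runP, pref_succ, pref_zero]
      have h1 : (G σ ([] : List Bool)).2 = [] := by simp [G]
      rw [h1]
      simp [choquetHist, List.range_succ, h0]
  | (n+1) => by
      rw [pref_succ, G_cons_snd, ← pref_succ, hist_eq σ a n, choquetHist_succ]
      congr 1


lemma runP_eq [Nonempty X] (σ : StrongChoquetStrategy X) (a : ℕ → Bool) (n : ℕ) :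
    runP σ a n = if a n then (pairC σ (G σ (pref a n)).2).1
      else (pairC σ (G σ (pref a n)).2).2 := by
  simp only [runP, pref_succ, G_cons_fst]

lemma runP_mem [Nonempty X] (σ : StrongChoquetStrategy X) (a : ℕ → Bool) (n : ℕ)
    (hP : Pgood σ ((G σ (pref a n)).2) (pairC σ ((G σ (pref a n)).2))) :
    IsOpen (runP σ a n).2 ∧ (runP σ a n).1 ∈ (runP σ a n).2 ∧
      (runP σ a n).2 ⊆ tgt σ ((G σ (pref a n)).2) := by
  obtain ⟨h1, h2, h3, h4, h5, h6, h7⟩ := hP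
  rw [runP_eq]
  cases a n <;> simp_all

lemma hist_ne_nil [Nonempty X] (σ : StrongChoquetStrategy X) (a : ℕ → Bool) (n : ℕ) :
    (G σ (pref a (n + 1))).2 ≠ [] := by
  rw [hist_eq]
  simp [choquetHist]

lemma legal [Nonempty X] [T2Space X] [ConnectedSpace X] [Nontrivial X]
    (σ : StrongChoquetStrategy X) (hσ : IsStrongChoquetWinning σ) (a : ℕ → Bool) : ∀ n : ℕ,
    ((∀ m, m ≤ n → IsOpen ((runP σ a) m).2 ∧ ((runP σ a) m).1 ∈ ((runP σ a) m).2) ∧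
     (∀ m, m < n → ((runP σ a) (m + 1)).2 ⊆ σ (choquetHist (runP σ a) m))) ∧
    Pgood σ ((G σ (pref a (n + 1))).2) (pairC σ ((G σ (pref a (n + 1))).2)) := by
  have P0 : Pgood σ ((G σ (pref a 0)).2) (pairC σ ((G σ (pref a 0)).2)) := by
    have e : (G σ (pref a 0)).2 = [] := by rw [pref_zero]; simp [G]
    rw [e]
    apply pairC_spec
    have := exists_two_disjoint (X := X) isOpen_univ Set.univ_nonempty
    simpa [Pgood, tgt] using this
  intro n
  induction n with
  | zero =>
      have base := runP_mem σ a 0 P0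
      have leg1 : ∀ m, m ≤ 0 → IsOpen ((runP σ a) m).2 ∧ ((runP σ a) m).1 ∈ ((runP σ a) m).2 := by
        intro m hm
        rcases Nat.le_zero.mp hm with rfl
        exact ⟨base.1, base.2.1⟩
      have leg2 : ∀ m, m < 0 → ((runP σ a) (m + 1)).2 ⊆ σ (choquetHist (runP σ a) m) :=
        fun m hm => absurd hm (Nat.not_lt_zero m)
      refine ⟨⟨leg1, leg2⟩, ?_⟩
      have hh := (hσ.1 (runP σ a) 0 ⟨leg1, leg2⟩)
      apply pairC_spec
      have ht : tgt σ ((G σ (pref a 1)).2) = σ (choquetHist (runP σ a) 0) := by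
        rw [tgt_ne_nil σ (hist_ne_nil σ a 0), hist_eq]
      have := exists_two_disjoint (X := X) hh.1 ⟨_, hh.2.1⟩
      simpa [Pgood, ht] using this
  | succ n ih =>
      obtain ⟨⟨ih1, ih2⟩, ihP⟩ := ih
      have step := runP_mem σ a (n + 1) ihP
      have hsub : (runP σ a (n + 1)).2 ⊆ σ (choquetHist (runP σ a) n) := by
        have h := step.2.2
        rwa [tgt_ne_nil σ (hist_ne_nil σ a n), hist_eq] at h
      have leg1 : ∀ m, m ≤ n + 1 →
          IsOpen ((runP σ a) m).2 ∧ ((runP σ a) m).1 ∈ ((runP σ a) m).2 := by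
        intro m hm
        rcases Nat.eq_or_lt_of_le hm with h | h
        · subst h; exact ⟨step.1, step.2.1⟩
        · exact ih1 m (Nat.lt_succ_iff.mp h)
      have leg2 : ∀ m, m < n + 1 → ((runP σ a) (m + 1)).2 ⊆ σ (choquetHist (runP σ a) m) := by
        intro m hm
        rcases Nat.lt_succ_iff_lt_or_eq.mp hm with h | h
        · exact ih2 m h
        · subst h; exact hsub
      refine ⟨⟨leg1, leg2⟩, ?_⟩
      have hh := (hσ.1 (runP σ a) (n + 1) ⟨leg1, leg2⟩)
      apply pairC_spec
      have ht : tgt σ ((G σ (pref a (n + 2))).2) = σ (choquetHist (runP σ a) (n + 1)) := by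
        rw [tgt_ne_nil σ (hist_ne_nil σ a (n + 1)), hist_eq]
      have := exists_two_disjoint (X := X) hh.1 ⟨_, hh.2.1⟩
      simpa [Pgood, ht] using this

end ChoquetAux

/-- A regular (T₃) connected space with at least two points in which Player II has a
winning strategy in the strong Choquet game has cardinality at least `2^ℵ₀`. -/
theorem continuum_le_of_stronglyChoquet {X : Type*} [TopologicalSpace X] [T3Space X]
    [ConnectedSpace X] [Nontrivial X]
    (h : ∃ σ : StrongChoquetStrategy X, IsStrongChoquetWinning σ) :
    Cardinal.continuum ≤ Cardinal.mk X := by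
  obtain ⟨σ, hσ⟩ := h
  have run_ok : ∀ a : ℕ → Bool, IsStrongChoquetRun σ (ChoquetAux.runP σ a) := fun a =>
    ⟨fun n => (ChoquetAux.legal σ hσ a n).1.1 n le_rfl,
     fun n => (ChoquetAux.legal σ hσ a (n + 1)).1.2 n (Nat.lt_succ_self n)⟩
  choose z hz using fun a : ℕ → Bool => hσ.2 _ (run_ok a)
  have hzmem : ∀ a n, z a ∈ (ChoquetAux.runP σ a n).2 := fun a n =>
    Set.mem_iInter.mp (hz a) n
  have hinj : Function.Injective z := by
    intro a b hab
    by_contra hne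
    have hex : ∃ m, a m ≠ b m := by
      by_contra hc; push_neg at hc; exact hne (funext hc)
    obtain ⟨n, hanbn, hmin⟩ : ∃ n, a n ≠ b n ∧ ∀ m, m < n → a m = b m :=
      ⟨Nat.find hex, Nat.find_spec hex, fun m hm => by
        by_contra hc; exact Nat.find_min hex hm hc⟩
    have hpref : ChoquetAux.pref a n = ChoquetAux.pref b n := by
      simp only [ChoquetAux.pref]
      congr 1
      apply List.map_congr_left
      intro m hm
      exact hmin m (List.mem_range.mp hm)
    have hP : ChoquetAux.Pgood σ ((ChoquetAux.G σ (ChoquetAux.pref a n)).2)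
        (ChoquetAux.pairC σ ((ChoquetAux.G σ (ChoquetAux.pref a n)).2)) := by
      cases n with
      | zero =>
          have e : (ChoquetAux.G σ (ChoquetAux.pref a 0)).2 = [] := by
            rw [ChoquetAux.pref_zero]; simp [ChoquetAux.G]
          rw [e]
          apply ChoquetAux.pairC_spec
          have := ChoquetAux.exists_two_disjoint (X := X) isOpen_univ Set.univ_nonempty
          simpa [ChoquetAux.Pgood, ChoquetAux.tgt] using this
      | succ m => exact (ChoquetAux.legal σ hσ a m).2
    have hd := hP.2.2.2.2.2.2
    have ea := ChoquetAux.runP_eq σ a n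
    have eb := ChoquetAux.runP_eq σ b n
    rw [← hpref] at eb
    have hza := hzmem a n
    have hzb := hzmem b n
    rw [hab, ea] at hza
    rw [eb] at hzb
    rcases Bool.eq_false_or_eq_true (a n) with ha | ha <;>
      rcases Bool.eq_false_or_eq_true (b n) with hb | hb
    · exact hanbn (ha.trans hb.symm)
    · rw [ha] at hza; rw [hb] at hzb; simp at hza hzb
      exact Set.disjoint_left.mp hd hza hzb
    · rw [ha] at hza; rw [hb] at hzb; simp at hza hzb
      exact Set.disjoint_left.mp hd hzb hza
    · exact hanbn (ha.trans hb.symm)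
  have hemb : Nonempty ((ℕ → Bool) ↪ X) := ⟨⟨z, hinj⟩⟩
  have h1 := Cardinal.lift_mk_le'.mpr hemb
  have h2 : Cardinal.mk (ℕ → Bool) = Cardinal.continuum := by
    rw [Cardinal.mk_arrow]
    simp [Cardinal.two_power_aleph0]
  rw [h2, Cardinal.lift_continuum, Cardinal.lift_uzero] at h1
  exact h1
end

section
/- Let X be a connected topological space. Define X̂ = {(x, i, j) ∈ X × {0,1}² : ¬(i = 1 ∧ j = 1)}, and let O₁ = {(x,i,j) ∈ X̂ : i = 1}, O₂ = {(x,i,j) ∈ X̂ : j = 1}. Give X̂ the topology generated by the subbasis consisting of all sets {(x,i,j) ∈ X̂ : x ∈ O} for O open in X, together with O₁ and O₂. Then X̂ is connected. -/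
/-- The set `X̂ = {(x,i,j) ∈ X × {0,1}² : ¬(i = 1 ∧ j = 1)}`, with `{0,1}` modelled by
`Bool` (`1` corresponding to `true`). -/
abbrev Xhat7 (X : Type*) := {p : X × Bool × Bool // ¬(p.2.1 = true ∧ p.2.2 = true)}

/-- The subbasis on `X̂`: preimages of open sets of `X` together with
`O₁ = {(x,i,j) : i = 1}` and `O₂ = {(x,i,j) : j = 1}`. -/
def subbasis7 (X : Type*) [TopologicalSpace X] : Set (Set (Xhat7 X)) :=
  {s | ∃ O : Set X, IsOpen O ∧ s = {q : Xhat7 X | q.val.1 ∈ O}} ∪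
    {{q : Xhat7 X | q.val.2.1 = true}, {q : Xhat7 X | q.val.2.2 = true}}

/-- If `X` is connected then `X̂`, with the topology generated by the subbasis above,
is connected. -/
theorem Xhat7_connected (X : Type*) [TopologicalSpace X] [ConnectedSpace X] :
    @ConnectedSpace (Xhat7 X) (TopologicalSpace.generateFrom (subbasis7 X)) := by
  letI : TopologicalSpace (Xhat7 X) := TopologicalSpace.generateFrom (subbasis7 X)
  -- Three embeddings of X into X̂
  set f0 : X → Xhat7 X := fun x => ⟨(x, false, false), by simp⟩ with hf0
  set f1 : X → Xhat7 X := fun x => ⟨(x, true, false), by simp⟩ with hf1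
  set f2 : X → Xhat7 X := fun x => ⟨(x, false, true), by simp⟩ with hf2
  -- Key: any open set containing (x, false, false) contains every (x, b) in X̂.
  have key : ∀ U : Set (Xhat7 X), IsOpen U → ∀ x : X,
      f0 x ∈ U → ∀ (b : Bool × Bool) (hb : ¬(b.1 = true ∧ b.2 = true)),
        (⟨(x, b), hb⟩ : Xhat7 X) ∈ U := by
    intro U hU
    induction hU with
    | basic s hs =>
      intro x hx b hb
      rcases hs with ⟨O, _, rfl⟩ | hs | hs
      · exact hx
      · subst hs; simp [f0] at hx
      · subst hs; simp [f0] at hx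
    | univ => intro x _ b hb; trivial
    | inter s t _ _ ih1 ih2 =>
      intro x hx b hb; exact ⟨ih1 x hx.1 b hb, ih2 x hx.2 b hb⟩
    | sUnion S _ ih =>
      intro x hx b hb
      rcases hx with ⟨s, hs, hxs⟩
      exact ⟨s, hs, ih s hs x hxs b hb⟩
  -- each fk is continuous
  have hc : ∀ f : X → Xhat7 X, (∀ x, (f x).val.1 = x) →
      (∀ x y, (f x).val.2 = (f y).val.2) → Continuous f := by
    intro f h1 h2
    apply continuous_generateFrom_iff.mpr
    rintro s (⟨O, hO, rfl⟩ | hs | hs)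
    · convert hO using 1
      ext x; simp [h1]
    · subst hs
      rcases Classical.em ((f (Classical.arbitrary X)).val.2.1 = true) with h | h
      · convert isOpen_univ using 1
        ext x; simpa using (h2 x (Classical.arbitrary X)) ▸ h
      · convert isOpen_empty using 1
        ext x
        simp only [Set.mem_preimage, Set.mem_setOf_eq, Set.mem_empty_iff_false, iff_false]
        rw [h2 x (Classical.arbitrary X)]; exact h
    · subst hs
      rcases Classical.em ((f (Classical.arbitrary X)).val.2.2 = true) with h | h
      · convert isOpen_univ using 1
        ext x; simpa using (h2 x (Classical.arbitrary X)) ▸ h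
      · convert isOpen_empty using 1
        ext x
        simp only [Set.mem_preimage, Set.mem_setOf_eq, Set.mem_empty_iff_false, iff_false]
        rw [h2 x (Classical.arbitrary X)]; exact h
  have hc0 : Continuous f0 := hc f0 (fun _ => rfl) (fun _ _ => rfl)
  have hc1 : Continuous f1 := hc f1 (fun _ => rfl) (fun _ _ => rfl)
  have hc2 : Continuous f2 := hc f2 (fun _ => rfl) (fun _ _ => rfl)
  have hpre : ∀ (f : X → Xhat7 X), Continuous f → IsPreconnected (Set.range f) := by
    intro f hf
    rw [← Set.image_univ]
    exact isPreconnected_univ.image f hf.continuousOn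
  -- range f0 ⊆ closure (range f1) and closure (range f2)
  have hcl : ∀ (f : X → Xhat7 X), (∀ x, (f x).val.1 = x) →
      Set.range f0 ⊆ closure (Set.range f) := by
    rintro f h1 _ ⟨x, rfl⟩
    rw [mem_closure_iff]
    intro U hU hxU
    refine ⟨f x, ?_, ⟨x, rfl⟩⟩
    have hfx : f x = ⟨(x, (f x).val.2), (f x).2⟩ := by
      apply Subtype.ext
      exact Prod.ext (h1 x) rfl
    rw [hfx]
    exact key U hU x hxU (f x).val.2 (f x).2
  have hcl1 : Set.range f0 ⊆ closure (Set.range f1) := hcl f1 (fun _ => rfl)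
  have hcl2 : Set.range f0 ⊆ closure (Set.range f2) := hcl f2 (fun _ => rfl)
  have h10 : IsPreconnected (Set.range f1 ∪ Set.range f0) :=
    (hpre f1 hc1).subset_closure Set.subset_union_left
      (Set.union_subset subset_closure hcl1)
  have h20 : IsPreconnected (Set.range f2 ∪ Set.range f0) :=
    (hpre f2 hc2).subset_closure Set.subset_union_left
      (Set.union_subset subset_closure hcl2)
  obtain ⟨x0⟩ : Nonempty X := inferInstance
  have hu : IsPreconnected ((Set.range f1 ∪ Set.range f0) ∪ (Set.range f2 ∪ Set.range f0)) :=
    IsPreconnected.union (f0 x0) (Set.mem_union_right _ ⟨x0, rfl⟩)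
      (Set.mem_union_right _ ⟨x0, rfl⟩) h10 h20
  have huniv : ((Set.range f1 ∪ Set.range f0) ∪ (Set.range f2 ∪ Set.range f0))
      = (Set.univ : Set (Xhat7 X)) := by
    apply Set.eq_univ_of_forall
    rintro ⟨⟨x, i, j⟩, hp⟩
    match i, j with
    | false, false => exact Or.inl (Or.inr ⟨x, rfl⟩)
    | true, false => exact Or.inl (Or.inl ⟨x, rfl⟩)
    | false, true => exact Or.inr (Or.inl ⟨x, rfl⟩)
    | true, true => exact absurd ⟨rfl, rfl⟩ hp
  rw [huniv] at hu
  haveI : PreconnectedSpace (Xhat7 X) := ⟨hu⟩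
  exact ⟨⟨f0 x0⟩⟩
end

section
/- Let X be a connected topological space and W₀, W₁ ⊆ X open sets with W₀ ∩ W₁ ≠ ∅. Define X̂ = {(x, i) ∈ X × {0,1} : i = 1 → x ∈ W₀ ∩ W₁} and O₁ = {(x,i) ∈ X̂ : i = 1}. Give X̂ the topology generated by the subbasis consisting of all sets {(x,i) ∈ X̂ : x ∈ O} for O open in X, together with O₁. Then X̂ is connected. -/
/-- The set `X̂ = {(x,i) ∈ X × {0,1} : i = 1 → x ∈ W₀ ∩ W₁}`, with `{0,1}` modelled by
`Bool` (`1` corresponding to `true`). -/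
abbrev Xhat8 {X : Type*} (W₀ W₁ : Set X) :=
  {p : X × Bool // p.2 = true → p.1 ∈ W₀ ∩ W₁}

/-- The subbasis on `X̂`: preimages of open sets of `X` together with
`O₁ = {(x,i) : i = 1}`. -/
def subbasis8 {X : Type*} [TopologicalSpace X] (W₀ W₁ : Set X) :
    Set (Set (Xhat8 W₀ W₁)) :=
  {s | ∃ O : Set X, IsOpen O ∧ s = {q : Xhat8 W₀ W₁ | q.val.1 ∈ O}} ∪
    {{q : Xhat8 W₀ W₁ | q.val.2 = true}}

/-- If `X` is connected and `W₀, W₁` are open with `W₀ ∩ W₁ ≠ ∅`, then `X̂` with the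
topology generated by the subbasis above is connected. -/
theorem Xhat8_connected {X : Type*} [TopologicalSpace X] [ConnectedSpace X]
    (W₀ W₁ : Set X) (h₀ : IsOpen W₀) (h₁ : IsOpen W₁) (hne : (W₀ ∩ W₁).Nonempty) :
    @ConnectedSpace (Xhat8 W₀ W₁)
      (TopologicalSpace.generateFrom (subbasis8 W₀ W₁)) := by
  letI t : TopologicalSpace (Xhat8 W₀ W₁) :=
    TopologicalSpace.generateFrom (subbasis8 W₀ W₁)
  -- the bottom inclusion
  set f : X → Xhat8 W₀ W₁ := fun x => ⟨(x, false), fun h => nomatch h⟩ with hf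
  have hfc : Continuous f := by
    apply continuous_generateFrom_iff.mpr
    rintro s (⟨O, hO, rfl⟩ | hs)
    · exact hO
    · simp only [Set.mem_singleton_iff] at hs
      subst hs
      have : (f ⁻¹' {q : Xhat8 W₀ W₁ | q.val.2 = true}) = ∅ := by
        ext x; simp [hf]
      rw [this]; exact isOpen_empty
  -- key lemma: if a generated-open set contains a bottom point, it contains the top point
  have L : ∀ u : Set (Xhat8 W₀ W₁), TopologicalSpace.GenerateOpen (subbasis8 W₀ W₁) u →
      ∀ (x : X) (hx : x ∈ W₀ ∩ W₁),
        f x ∈ u → (⟨(x, true), fun _ => hx⟩ : Xhat8 W₀ W₁) ∈ u := by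
    intro u hu
    induction hu with
    | basic s hs =>
        intro x hx hm
        rcases hs with ⟨O, hO, rfl⟩ | hs
        · exact hm
        · simp only [Set.mem_singleton_iff] at hs
          subst hs
          simp [hf] at hm
    | univ => intro x hx _; trivial
    | inter u v _ _ ihu ihv => intro x hx hm; exact ⟨ihu x hx hm.1, ihv x hx hm.2⟩
    | sUnion s _ ih =>
        intro x hx hm
        rcases hm with ⟨w, hw, hm⟩
        exact ⟨w, hw, ih w hw x hx hm⟩
  rw [connectedSpace_iff_univ]
  constructor
  · obtain ⟨x, hx⟩ := hne
    exact ⟨f x, trivial⟩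
  · intro u v hu hv hcov ⟨p, _, hpu⟩ ⟨q, _, hqv⟩
    -- either u ∩ v is already nonempty, or the bottom copy meets u (resp. v)
    have key : ∀ (w w' : Set (Xhat8 W₀ W₁)), IsOpen w' → (∀ r, r ∈ w ∨ r ∈ w') →
        ∀ p' : Xhat8 W₀ W₁, p' ∈ w → (∃ x, f x ∈ w) ∨ (w ∩ w').Nonempty := by
      intro w w' hw' hcov' p' hp'
      obtain ⟨⟨x, i⟩, hi⟩ := p'
      cases i with
      | false =>
          left
          exact ⟨x, by convert hp' using 2⟩
      | true =>
          have hx : x ∈ W₀ ∩ W₁ := hi rfl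
          rcases hcov' (f x) with hfu | hfv
          · exact Or.inl ⟨x, hfu⟩
          · right
            refine ⟨⟨(x, true), fun _ => hx⟩, ?_, L w' hw' x hx hfv⟩
            convert hp' using 2
    have hcov' : ∀ r, r ∈ u ∨ r ∈ v := fun r => hcov (Set.mem_univ r)
    have hcov'' : ∀ r, r ∈ v ∨ r ∈ u := fun r => (hcov' r).symm
    rcases key u v hv hcov' p hpu with ⟨x, hxu⟩ | hne'
    · rcases key v u hu hcov'' q hqv with ⟨y, hyv⟩ | hne'
      · -- bottom copy is preconnected
        have hpre : IsPreconnected (f '' Set.univ) :=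
          (isPreconnected_univ).image f hfc.continuousOn
        have := hpre u v hu hv (fun r _ => hcov' r)
          ⟨f x, ⟨x, trivial, rfl⟩, hxu⟩ ⟨f y, ⟨y, trivial, rfl⟩, hyv⟩
        obtain ⟨r, _, hr⟩ := this
        exact ⟨r, trivial, hr⟩
      · obtain ⟨r, hr⟩ := hne'
        exact ⟨r, trivial, hr.2, hr.1⟩
    · obtain ⟨r, hr⟩ := hne'
      exact ⟨r, trivial, hr⟩
end

section
/- Let X be a connected topological space and W ⊆ X a nonempty open subset. Define X̂ = {(x, i, j) ∈ X × {0,1}² : (x ∈ W ∨ i = 1 ∨ j = 1) ∧ (i = 1 ∧ j = 1 → x ∈ W)}, with O₁ = {(x,i,j) ∈ X̂ : i = 1} and O₂ = {(x,i,j) ∈ X̂ : j = 1}. Give X̂ the topology generated by the subbasis of sets {(x,i,j) ∈ X̂ : x ∈ O} for O open in X, together with O₁ and O₂. Then X̂ is connected. -/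
/-- The set `X̂ = {(x,i,j) ∈ X × {0,1}² : (x ∈ W ∨ i = 1 ∨ j = 1) ∧ (i = 1 ∧ j = 1 → x ∈ W)}`,
with `{0,1}` modelled by `Bool` (`1` corresponding to `true`). -/
abbrev Xhat9 {X : Type*} (W : Set X) :=
  {p : X × Bool × Bool //
    (p.1 ∈ W ∨ p.2.1 = true ∨ p.2.2 = true) ∧ (p.2.1 = true ∧ p.2.2 = true → p.1 ∈ W)}

/-- The subbasis on `X̂`: preimages of open sets of `X` together with
`O₁ = {(x,i,j) : i = 1}` and `O₂ = {(x,i,j) : j = 1}`. -/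
def subbasis9 {X : Type*} [TopologicalSpace X] (W : Set X) : Set (Set (Xhat9 W)) :=
  {s | ∃ O : Set X, IsOpen O ∧ s = {q : Xhat9 W | q.val.1 ∈ O}} ∪
    {{q : Xhat9 W | q.val.2.1 = true}, {q : Xhat9 W | q.val.2.2 = true}}

/-- If `X` is connected and `W` is a nonempty open subset, then `X̂` with the topology
generated by the subbasis above is connected. -/
theorem Xhat9_connected {X : Type*} [TopologicalSpace X] [ConnectedSpace X]
    (W : Set X) (hW : IsOpen W) (hne : W.Nonempty) :
    @ConnectedSpace (Xhat9 W) (TopologicalSpace.generateFrom (subbasis9 W)) := by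
  letI t : TopologicalSpace (Xhat9 W) := TopologicalSpace.generateFrom (subbasis9 W)
  obtain ⟨w₀, hw₀⟩ := hne
  -- the two full copies of X
  have hvalid₁ : ∀ x : X, ((x, true, false).1 ∈ W ∨ (x, (true : Bool), (false : Bool)).2.1 = true ∨ (x, true, false).2.2 = true) ∧ ((x, (true:Bool), (false:Bool)).2.1 = true ∧ (x, (true:Bool), (false:Bool)).2.2 = true → x ∈ W) := by
    intro x; exact ⟨Or.inr (Or.inl rfl), by simp⟩
  have hvalid₂ : ∀ x : X, ((x, false, true).1 ∈ W ∨ (x, (false : Bool), (true : Bool)).2.1 = true ∨ (x, false, true).2.2 = true) ∧ ((x, (false:Bool), (true:Bool)).2.1 = true ∧ (x, (false:Bool), (true:Bool)).2.2 = true → x ∈ W) := by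
    intro x; exact ⟨Or.inr (Or.inr rfl), by simp⟩
  set f₁ : X → Xhat9 W := fun x => ⟨(x, true, false), hvalid₁ x⟩ with hf₁
  set f₂ : X → Xhat9 W := fun x => ⟨(x, false, true), hvalid₂ x⟩ with hf₂
  have hcont : ∀ (f : X → Xhat9 W) (i j : Bool), (∀ x, (f x).val = (x, i, j)) → Continuous f := by
    intro f i j hfx
    rw [continuous_generateFrom_iff]
    rintro s hs
    rcases hs with ⟨O, hO, rfl⟩ | hs
    · have : f ⁻¹' {q : Xhat9 W | q.val.1 ∈ O} = O := by
        ext x; simp [Set.mem_preimage, hfx x]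
      rwa [this]
    · rcases hs with rfl | rfl
      · have : f ⁻¹' {q : Xhat9 W | q.val.2.1 = true} = {x | i = true} := by
          ext x; simp [Set.mem_preimage, hfx x]
        rw [this]; cases i <;> simp
      · have : f ⁻¹' {q : Xhat9 W | q.val.2.2 = true} = {x | j = true} := by
          ext x; simp [Set.mem_preimage, hfx x]
        rw [this]; cases j <;> simp
  have hA : IsPreconnected (Set.range f₁) :=
    (isPreconnected_range (hcont f₁ true false fun x => rfl))
  have hB : IsPreconnected (Set.range f₂) :=
    (isPreconnected_range (hcont f₂ false true fun x => rfl))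
  -- key: any open set containing q also contains (q.1, true, true) when q.1 ∈ W
  have key : ∀ (U : Set (Xhat9 W)), TopologicalSpace.GenerateOpen (subbasis9 W) U →
      ∀ q : Xhat9 W, q ∈ U → ∀ (h : _), (⟨(q.val.1, true, true), h⟩ : Xhat9 W) ∈ U := by
    intro U hU
    induction hU with
    | basic s hs =>
      rintro q hq h
      rcases hs with ⟨O, hO, rfl⟩ | hs
      · exact hq
      · rcases hs with rfl | rfl <;> simp
    | univ => intro q hq h; trivial
    | inter s u _ _ ihs ihu => intro q hq h; exact ⟨ihs q hq.1 h, ihu q hq.2 h⟩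
    | sUnion S _ ih =>
      rintro q ⟨s, hsS, hqs⟩ h; exact ⟨s, hsS, ih s hsS q hqs h⟩
  -- the fibers over points of W
  have hSw : ∀ w ∈ W, IsPreconnected {q : Xhat9 W | q.val.1 = w} := by
    intro w hw
    have hpw : ((w, true, true).1 ∈ W ∨ ((w, (true:Bool), (true:Bool))).2.1 = true ∨ ((w, (true:Bool), (true:Bool))).2.2 = true) ∧ (((w, (true:Bool), (true:Bool))).2.1 = true ∧ ((w, (true:Bool), (true:Bool))).2.2 = true → w ∈ W) := ⟨Or.inl hw, fun _ => hw⟩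
    set pw : Xhat9 W := ⟨(w, true, true), hpw⟩ with hpwdef
    have h1 : IsPreconnected ({pw} : Set (Xhat9 W)) := isPreconnected_singleton
    refine h1.subset_closure (by simp [hpwdef]) ?_
    intro q hq
    rw [mem_closure_iff]
    intro o ho hqo
    refine ⟨pw, ?_, rfl⟩
    have hq1 : q.val.1 = w := hq
    have hh : ((q.val.1, true, true).1 ∈ W ∨ ((q.val.1, (true:Bool), (true:Bool))).2.1 = true ∨ ((q.val.1, (true:Bool), (true:Bool))).2.2 = true) ∧ (((q.val.1, (true:Bool), (true:Bool))).2.1 = true ∧ ((q.val.1, (true:Bool), (true:Bool))).2.2 = true → q.val.1 ∈ W) := ⟨Or.inl (hq1 ▸ hw), fun _ => hq1 ▸ hw⟩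
    have := key o ho q hqo hh
    have heq : (⟨(q.val.1, true, true), hh⟩ : Xhat9 W) = pw := by
      apply Subtype.ext; simp [hpwdef, hq1]
    rwa [heq] at this
  -- glue: T = A ∪ S_{w₀} ∪ B
  set A := Set.range f₁
  set B := Set.range f₂
  set S : X → Set (Xhat9 W) := fun w => {q : Xhat9 W | q.val.1 = w} with hS
  have hAS : IsPreconnected (A ∪ S w₀) := by
    refine IsPreconnected.union (f₁ w₀) ⟨w₀, rfl⟩ rfl hA (hSw w₀ hw₀)
  have hT : IsPreconnected ((A ∪ S w₀) ∪ B) := by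
    refine IsPreconnected.union (f₂ w₀) (Or.inr rfl) ⟨w₀, rfl⟩ hAS hB
  set T := (A ∪ S w₀) ∪ B with hTdef
  -- the covering family
  set c : Set (Set (Xhat9 W)) := {s | ∃ w ∈ W, s = T ∪ S w} with hc
  have hp₀ : ((w₀, true, true).1 ∈ W ∨ ((w₀, (true:Bool), (true:Bool))).2.1 = true ∨ ((w₀, (true:Bool), (true:Bool))).2.2 = true) ∧ (((w₀, (true:Bool), (true:Bool))).2.1 = true ∧ ((w₀, (true:Bool), (true:Bool))).2.2 = true → w₀ ∈ W) := ⟨Or.inl hw₀, fun _ => hw₀⟩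
  set p₀ : Xhat9 W := ⟨(w₀, true, true), hp₀⟩ with hp₀def
  have hsU : IsPreconnected (⋃₀ c) := by
    refine isPreconnected_sUnion p₀ c ?_ ?_
    · rintro s ⟨w, hw, rfl⟩
      exact Set.mem_union_left _ (Set.mem_union_left _ (Set.mem_union_right _ rfl))
    · rintro s ⟨w, hw, rfl⟩
      exact IsPreconnected.union (f₁ w)
        (show f₁ w ∈ T from Or.inl (Or.inl ⟨w, rfl⟩))
        rfl hT (hSw w hw)
  have hcov : ⋃₀ c = Set.univ := by
    apply Set.eq_univ_of_forall
    rintro ⟨⟨x, i, j⟩, hq⟩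
    by_cases hx : x ∈ W
    · exact ⟨T ∪ S x, ⟨x, hx, rfl⟩, Set.mem_union_right _ rfl⟩
    · refine ⟨T ∪ S w₀, ⟨w₀, hw₀, rfl⟩, Set.mem_union_left _ ?_⟩
      rcases hq.1 with h | h | h
      · exact absurd h hx
      · cases j
        · subst h
          exact Set.mem_union_left _ (Set.mem_union_left _ ⟨x, rfl⟩)
        · exact absurd (hq.2 ⟨h, rfl⟩) hx
      · cases i
        · subst h
          exact Set.mem_union_right _ ⟨x, rfl⟩
        · exact absurd (hq.2 ⟨rfl, h⟩) hx
  exact { toPreconnectedSpace := ⟨by rw [← hcov]; exact hsU⟩, toNonempty := ⟨p₀⟩ }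
end

section
/- Let X be a connected topological space and W ⊆ X a nonempty open subset. Define X̂ = {(x, i, j) ∈ X × {0,1}² : (x ∈ W ∨ j = 1) ∧ (i = 1 → (x ∈ W ∧ j = 0))}, with O₁ = {(x,i,j) ∈ X̂ : i = 1} and O₂ = {(x,i,j) ∈ X̂ : j = 1}. Give X̂ the topology generated by the subbasis of sets {(x,i,j) ∈ X̂ : x ∈ O} for O open in X, together with O₁ and O₂. Then X̂ is connected. -/
/-- The set `X̂ = {(x,i,j) ∈ X × {0,1}² : (x ∈ W ∨ j = 1) ∧ (i = 1 → (x ∈ W ∧ j = 0))}`,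
with `{0,1}` modelled by `Bool` (`1` corresponding to `true`, `0` to `false`). -/
abbrev Xhat10 {X : Type*} (W : Set X) :=
  {p : X × Bool × Bool //
    (p.1 ∈ W ∨ p.2.2 = true) ∧ (p.2.1 = true → p.1 ∈ W ∧ p.2.2 = false)}

/-- The subbasis on `X̂`: preimages of open sets of `X` together with
`O₁ = {(x,i,j) : i = 1}` and `O₂ = {(x,i,j) : j = 1}`. -/
def subbasis10 {X : Type*} [TopologicalSpace X] (W : Set X) : Set (Set (Xhat10 W)) :=
  {s | ∃ O : Set X, IsOpen O ∧ s = {q : Xhat10 W | q.val.1 ∈ O}} ∪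
    {{q : Xhat10 W | q.val.2.1 = true}, {q : Xhat10 W | q.val.2.2 = true}}

/-- The point `(x, 0, 1)` of `X̂`. -/
def pt2 {X : Type*} (W : Set X) (x : X) : Xhat10 W :=
  ⟨(x, false, true), Or.inr rfl, by simp⟩

/-- The point `(x, 0, 0)` of `X̂`, for `x ∈ W`. -/
def pt0 {X : Type*} {W : Set X} {x : X} (hx : x ∈ W) : Xhat10 W :=
  ⟨(x, false, false), Or.inl hx, by simp⟩

/-- The point `(x, 1, 0)` of `X̂`, for `x ∈ W`. -/
def pt1 {X : Type*} {W : Set X} {x : X} (hx : x ∈ W) : Xhat10 W :=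
  ⟨(x, true, false), Or.inl hx, fun _ => ⟨hx, rfl⟩⟩

/-- Key fact: any open set of the generated topology containing a point of the
form `(x, 0, 0)` contains every point of `X̂` with the same first coordinate. -/
lemma key10 {X : Type*} [TopologicalSpace X] {W : Set X} {U : Set (Xhat10 W)}
    (hU : TopologicalSpace.GenerateOpen (subbasis10 W) U)
    {a b : Xhat10 W} (h1 : a.val.1 = b.val.1) (h2 : a.val.2.1 = false)
    (h3 : a.val.2.2 = false) (ha : a ∈ U) : b ∈ U := by
  induction hU with
  | basic s hs =>
    rcases hs with ⟨O, _, rfl⟩ | rfl | rfl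
    · show b.val.1 ∈ O
      rw [← h1]; exact ha
    · exact absurd (h2 ▸ ha : (false : Bool) = true) (by simp)
    · exact absurd (h3 ▸ ha : (false : Bool) = true) (by simp)
  | univ => trivial
  | inter s t _ _ ihs iht => exact ⟨ihs ha.1, iht ha.2⟩
  | sUnion S _ ih =>
    obtain ⟨s, hsS, has⟩ := ha
    exact ⟨s, hsS, ih s hsS has⟩

/-- If `X` is connected and `W` is a nonempty open subset, then `X̂` with the topology
generated by the subbasis above is connected. -/
theorem Xhat10_connected {X : Type*} [TopologicalSpace X] [ConnectedSpace X]
    (W : Set X) (hW : IsOpen W) (hne : W.Nonempty) :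
    @ConnectedSpace (Xhat10 W) (TopologicalSpace.generateFrom (subbasis10 W)) := by
  letI t : TopologicalSpace (Xhat10 W) := TopologicalSpace.generateFrom (subbasis10 W)
  obtain ⟨x₀, hx₀⟩ := hne
  -- the canonical copy of X inside X̂
  set C : Set (Xhat10 W) := Set.range (pt2 W) with hC
  have hg : Continuous (pt2 W) := by
    apply continuous_generateFrom_iff.mpr
    rintro s (⟨O, hO, rfl⟩ | rfl | rfl)
    · simpa [pt2] using hO
    · convert isOpen_empty
      ext x; simp [pt2]
    · convert isOpen_univ
      ext x; simp [pt2]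
  have hCpre : IsPreconnected C := isPreconnected_range hg
  -- every open set containing pt0 contains pt2 and pt1 of the same point
  have hopen : ∀ {U : Set (Xhat10 W)}, IsOpen U → ∀ {x : X} (hx : x ∈ W),
      pt0 hx ∈ U → pt2 W x ∈ U ∧ pt1 hx ∈ U := by
    intro U hU x hx h0
    have hU' : TopologicalSpace.GenerateOpen (subbasis10 W) U := hU
    exact ⟨key10 (a := pt0 hx) hU' rfl rfl rfl h0, key10 (a := pt0 hx) hU' rfl rfl rfl h0⟩
  -- the set A = C ∪ {points of the form (x,0,0)}
  set A : Set (Xhat10 W) := C ∪ {q : Xhat10 W | q.val.2.1 = false ∧ q.val.2.2 = false}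
    with hAdef
  have hmemW : ∀ q : Xhat10 W, q.val.2.2 = false → q.val.1 ∈ W := by
    intro q hq
    rcases q.property.1 with h | h
    · exact h
    · rw [hq] at h; exact absurd h (by simp)
  have hptq : ∀ (q : Xhat10 W) (h1 : q.val.2.1 = false) (h2 : q.val.2.2 = false),
      q = pt0 (hmemW q h2) := by
    intro q h1 h2
    apply Subtype.ext
    exact Prod.ext rfl (Prod.ext h1 h2)
  have hA : IsPreconnected A := by
    apply hCpre.subset_closure Set.subset_union_left
    rintro q (hq | ⟨hq1, hq2⟩)
    · exact subset_closure hq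
    · have hxW := hmemW q hq2
      have hq' : q = pt0 hxW := hptq q hq1 hq2
      rw [hq', mem_closure_iff]
      intro o ho hpo
      exact ⟨pt2 W q.val.1, (hopen ho hxW hpo).1, Set.mem_range_self _⟩
  -- the pair {(x,1,0),(x,0,0)} is preconnected
  have hB : ∀ {x : X} (hx : x ∈ W),
      IsPreconnected ({pt1 hx, pt0 hx} : Set (Xhat10 W)) := by
    intro x hx
    apply isPreconnected_singleton (x := pt1 hx) |>.subset_closure
    · simp
    · rintro q (rfl | rfl)
      · exact subset_closure rfl
      · rw [mem_closure_iff]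
        intro o ho hpo
        exact ⟨pt1 hx, (hopen ho hx hpo).2, rfl⟩
  -- combine: the whole space is preconnected
  have hz : pt2 W x₀ ∈ A := Or.inl (Set.mem_range_self _)
  set c : Set (Set (Xhat10 W)) :=
    insert A {s | ∃ x, ∃ hx : x ∈ W, s = A ∪ {pt1 hx, pt0 hx}} with hc
  have hunion : IsPreconnected (⋃₀ c) := by
    apply isPreconnected_sUnion (pt2 W x₀)
    · rintro s (rfl | ⟨x, hx, rfl⟩)
      · exact hz
      · exact Or.inl hz
    · rintro s (rfl | ⟨x, hx, rfl⟩)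
      · exact hA
      · exact IsPreconnected.union (pt0 hx) (Or.inr ⟨rfl, rfl⟩) (Or.inr rfl) hA (hB hx)
  have hcover : (Set.univ : Set (Xhat10 W)) = ⋃₀ c := by
    apply Set.eq_of_subset_of_subset _ (Set.subset_univ _)
    intro q _
    by_cases h2 : q.val.2.2 = true
    · -- q = pt2 of its first coordinate
      have h1 : q.val.2.1 = false := by
        by_contra h
        have := (q.property.2 (by simpa using h)).2
        rw [this] at h2; exact absurd h2 (by simp)
      have : q = pt2 W q.val.1 := Subtype.ext (Prod.ext rfl (Prod.ext h1 h2))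
      exact ⟨A, Or.inl rfl, Or.inl ⟨q.val.1, this.symm⟩⟩
    · have h2' : q.val.2.2 = false := by simpa using h2
      by_cases h1 : q.val.2.1 = true
      · have hxW := (q.property.2 h1).1
        have : q = pt1 hxW := Subtype.ext (Prod.ext rfl (Prod.ext h1 h2'))
        exact ⟨A ∪ {pt1 hxW, pt0 hxW}, Or.inr ⟨q.val.1, hxW, rfl⟩,
          Or.inr (Or.inl this)⟩
      · have h1' : q.val.2.1 = false := by simpa using h1
        exact ⟨A, Or.inl rfl, Or.inr ⟨h1', h2'⟩⟩
  have hpre : PreconnectedSpace (Xhat10 W) := ⟨hcover ▸ hunion⟩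
  exact { toPreconnectedSpace := hpre, toNonempty := ⟨pt2 W x₀⟩ }
end
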